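/- arXiv:2210.14638 — 2 statements merged into one kernel-verified Lean document; each statement's English description precedes it below -/
import Mathlib

section
/- Let G be a graph and (A,B) a clique separation of G. Then for every positive integer k, the subgraph of the k-improved graph of G induced on A equals the k-improved graph of G[A]; that is, G^⟨k⟩[A] = (G[A])^⟨k⟩. -/
open Finset

variable {V : Type*} [Fintype V] [DecidableEq V]

/-- A separation of a graph: a pair of vertex sets covering all vertices with no edge
between the two strict sides. Its order is `(A ∩ B).card`. -/
def IsSep (G : SimpleGraph V) (A B : Finset V) : Prop :=
  A ∪ B = Finset.univ ∧
    ∀ a ∈ A, a ∉ B → ∀ b ∈ B, b ∉ A → ¬ G.Adj a b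

/-- The `k`-improved graph `G^⟨k⟩`: `x` and `y` are adjacent iff they are distinct and no
separation of `G` of order at most `k` separates them (i.e. `μ_G(x,y) > k`). -/
def ImprovedGraph (G : SimpleGraph V) (k : ℕ) : SimpleGraph V where
  Adj x y := x ≠ y ∧ ∀ A B : Finset V, IsSep G A B → (A ∩ B).card ≤ k →
    ¬ ((x ∈ A ∧ x ∉ B ∧ y ∈ B ∧ y ∉ A) ∨ (y ∈ A ∧ y ∉ B ∧ x ∈ B ∧ x ∉ A))
  symm := ⟨by
    rintro x y ⟨hxy, h⟩
    exact ⟨hxy.symm, fun A B hs ho hc => h A B hs ho hc.symm⟩⟩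
  loopless := ⟨fun x h => h.1 rfl⟩

/-- `S` is `(q,k)`-unbreakable in `G`: every separation of order at most `k` has at most `q`
vertices of `S` on one of its sides. -/
def UnbreakableSet (G : SimpleGraph V) (S : Finset V) (q k : ℕ) : Prop :=
  ∀ A B : Finset V, IsSep G A B → (A ∩ B).card ≤ k →
    (A ∩ S).card ≤ q ∨ (B ∩ S).card ≤ q

/-- A clique separation: both strict sides nonempty and the separator is a clique. -/
def IsCliqueSep (G : SimpleGraph V) (A B : Finset V) : Prop :=
  IsSep G A B ∧ (A \ B).Nonempty ∧ (B \ A).Nonempty ∧ G.IsClique (↑(A ∩ B) : Set V)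

/-- `y` is reachable from `x` in `G − W`. -/
def AvoidReach (G : SimpleGraph V) (W : Finset V) (x y : V) : Prop :=
  ∃ p : G.Walk x y, ∀ v ∈ p.support, v ∉ W

/-- `W` is an `X`-`Y` separator: no vertex of `Y \ W` is reachable from `X \ W` in `G − W`. -/
def IsSepSet (G : SimpleGraph V) (W X Y : Finset V) : Prop :=
  ∀ x ∈ X, ∀ y ∈ Y, ¬ AvoidReach G W x y

/-- `R_{G−W}(X \ W)`: the set of vertices reachable from `X \ W` in `G − W`. -/
def ReachSet (G : SimpleGraph V) (W X : Finset V) : Set V :=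
  {y | ∃ x ∈ X, AvoidReach G W x y}

/-- An important `X`-`Y` separator. -/
def IsImpSep (G : SimpleGraph V) (X Y W : Finset V) : Prop :=
  IsSepSet G W X Y ∧
  (∀ W' ⊆ W, W' ≠ W → ¬ IsSepSet G W' X Y) ∧
  ∀ W' : Finset V, IsSepSet G W' X Y → W'.card ≤ W.card →
    ¬ (ReachSet G W X ⊂ ReachSet G W' X)

/-- A `k`-important `X`-`Y` separator. -/
def IsKImpSep (G : SimpleGraph V) (k : ℕ) (X Y W : Finset V) : Prop :=
  IsImpSep G X Y W ∧ W.card ≤ k ∧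
  ∀ W' : Finset V, IsImpSep G X Y W' → W'.card ≤ k → W' ≠ W →
    ¬ (ReachSet G W X ⊆ ReachSet G W' X)

/-- The `k`-important separator extension of `D`. -/
def KImpExt (G : SimpleGraph V) (D : Finset V) (k : ℕ) : Set V :=
  {u | (∃ v, v ≠ u ∧ ∃ S : Finset V, IsKImpSep G k {v} D S ∧ u ∈ S) ∨
       (({u} : Finset V).card ≤ k ∧ IsSepSet G {u} {u} D ∧
        ∀ S : Finset V, IsSepSet G S {u} D → S.card ≤ k → S = {u})}

/-- `C` is (the vertex set of) a connected component of `G − A`. -/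
def IsCompAvoiding (G : SimpleGraph V) (A : Set V) (C : Set V) : Prop :=
  ∃ x, x ∉ A ∧ C = {y | ∃ p : G.Walk x y, ∀ v ∈ p.support, v ∉ A}

/-- `C` is (the vertex set of) a connected component of the induced subgraph `G[S]`. -/
def IsCompWithin (G : SimpleGraph V) (S : Set V) (C : Set V) : Prop :=
  ∃ x ∈ S, C = {y | ∃ p : G.Walk x y, ∀ v ∈ p.support, v ∈ S}

/-- The (open) neighborhood of a vertex set `C` in `G`. -/
def nbhdSet (G : SimpleGraph V) (C : Set V) : Set V :=
  {v | v ∉ C ∧ ∃ c ∈ C, G.Adj v c}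

/-- A connectivity-sensitive star decomposition of `G`, given by its central bag and its
set of leaf bags. -/
structure ConnSensStar (G : SimpleGraph V) where
  center : Finset V
  leaves : Finset (Finset V)
  cover : ∀ v : V, v ∈ center ∨ ∃ L ∈ leaves, v ∈ L
  edges : ∀ x y : V, G.Adj x y →
    (x ∈ center ∧ y ∈ center) ∨ ∃ L ∈ leaves, x ∈ L ∧ y ∈ L
  inter : ∀ L ∈ leaves, ∀ L' ∈ leaves, L ≠ L' → ∀ v ∈ L, v ∈ L' → v ∈ center
  adh_distinct : ∀ L ∈ leaves, ∀ L' ∈ leaves, L ∩ center = L' ∩ center → L = L'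
  comp_nbhd : ∀ L ∈ leaves, ∀ C : Set V,
    IsCompWithin G ((↑L : Set V) \ (↑center : Set V)) C → nbhdSet G C = ↑(L ∩ center)

/-- `(A,B)` is an `S`-stable separation of `G`. -/
def IsStableSep (G : SimpleGraph V) (S : Finset V) (A B : Finset V) : Prop :=
  IsSep G A B ∧ ∃ SL SR : Finset V, SL ∪ SR = S ∧ SL ∩ SR = ∅ ∧ SL ⊆ A ∧ SR ⊆ B ∧
    ∀ A' B' : Finset V, IsSep G A' B' → SL ⊆ A' → SR ⊆ B' → (A ∩ B).card ≤ (A' ∩ B').card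

/-- A `Λ`-boundaried graph: a graph together with an injective partial assignment of
labels to (boundary) vertices. -/
structure BGraph (Λ : Type*) (V : Type*) where
  G : SimpleGraph V
  bd : Λ → Option V
  inj : ∀ l l' v, bd l = some v → bd l' = some v → l = l'

/-- `K` (with embeddings `f₁`, `f₂`) is the gluing `H₁ ⊕ H₂` of two boundaried graphs:
vertices of equal label are identified, and an edge is present iff it is present in
(at least) one of the two graphs. -/
def IsGluing {Λ V₁ V₂ W : Type*} (H₁ : BGraph Λ V₁) (H₂ : BGraph Λ V₂)
    (K : SimpleGraph W) (f₁ : V₁ → W) (f₂ : V₂ → W) : Prop :=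
  Function.Injective f₁ ∧ Function.Injective f₂ ∧
  (∀ w : W, (∃ a, f₁ a = w) ∨ (∃ b, f₂ b = w)) ∧
  (∀ a b, f₁ a = f₂ b ↔ ∃ l, H₁.bd l = some a ∧ H₂.bd l = some b) ∧
  (∀ x y : W, K.Adj x y ↔
    (∃ a b, f₁ a = x ∧ f₁ b = y ∧ H₁.G.Adj a b) ∨
    (∃ a b, f₂ a = x ∧ f₂ b = y ∧ H₂.G.Adj a b))

/-- The weak cut signature value of the boundaried graph `H` at `(A', B')` is at most
`n − |A' ∩ B'|`: there is a separation of order at most `n` whose sides contain the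
boundary vertices labeled by `A'` and `B'`, respectively. -/
def WeakSigLE {Λ : Type*} {V : Type*} [Fintype V] [DecidableEq V]
    (H : BGraph Λ V) (A' B' : Finset Λ) (n : ℕ) : Prop :=
  ∃ A B : Finset V, IsSep H.G A B ∧
    (∀ l ∈ A', ∀ v, H.bd l = some v → v ∈ A) ∧
    (∀ l ∈ B', ∀ v, H.bd l = some v → v ∈ B) ∧ (A ∩ B).card ≤ n

/-- Two `Λ`-boundaried graphs have the same weak cut signature. -/
def SameWeakSig {Λ : Type*} [Fintype Λ] [DecidableEq Λ] {V₁ V₂ : Type*}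
    [Fintype V₁] [DecidableEq V₁] [Fintype V₂] [DecidableEq V₂]
    (H₁ : BGraph Λ V₁) (H₂ : BGraph Λ V₂) : Prop :=
  ∀ A' B' : Finset Λ, A' ∪ B' = Finset.univ →
    ∀ n : ℕ, WeakSigLE H₁ A' B' n ↔ WeakSigLE H₂ A' B' n

/-!
Restricting a separation of `G` to `A` (taking preimages under the inclusion) gives a separation
of `G[A]` of no larger order, so `μ_{G[A]} ≥ μ_G` on `A`. Conversely, a clique cannot be split by a
separation, so the clique `A ∩ B` lies on one side of any separation of `G[A]`; adding `V \ A` to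
that side yields a separation of `G` of the same order, because `A ∩ B` already separates `A \ B`
from `V \ A`.
-/

lemma IsSep.symm {G : SimpleGraph V} {A B : Finset V} (h : IsSep G A B) : IsSep G B A :=
  ⟨by rw [union_comm, h.1], fun a ha haA b hb hbB hab => h.2 b hb hbB a ha haA hab.symm⟩

lemma IsSep.mem_or_mem {G : SimpleGraph V} {A B : Finset V} (h : IsSep G A B) (v : V) :
    v ∈ A ∨ v ∈ B :=
  mem_union.mp (h.1 ▸ mem_univ v)

lemma improvedGraph_adj_iff {G : SimpleGraph V} {k : ℕ} {x y : V} :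
    (ImprovedGraph G k).Adj x y ↔ x ≠ y ∧ ∀ A B : Finset V, IsSep G A B →
      x ∈ A → x ∉ B → y ∈ B → y ∉ A → k < (A ∩ B).card := by
  refine and_congr_right fun _ => ⟨fun h A B hAB hxA hxB hyB hyA => ?_, fun h A B hAB hk => ?_⟩
  · by_contra! hk
    exact h A B hAB hk (Or.inl ⟨hxA, hxB, hyB, hyA⟩)
  · rintro (⟨hxA, hxB, hyB, hyA⟩ | ⟨hyA, hyB, hxB, hxA⟩)
    · exact (h A B hAB hxA hxB hyB hyA).not_ge hk
    · exact (h B A hAB.symm hxB hxA hyA hyB).not_ge (by rwa [inter_comm])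

lemma IsSep.subset_or_subset_of_isClique {G : SimpleGraph V} {A B : Finset V} (h : IsSep G A B)
    {K : Set V} (hK : G.IsClique K) : K ⊆ A ∨ K ⊆ B := by
  by_contra! hKAB
  obtain ⟨a, haK, haB⟩ := Set.not_subset.mp hKAB.2
  obtain ⟨b, hbK, hbA⟩ := Set.not_subset.mp hKAB.1
  have haA : a ∈ A := (h.mem_or_mem a).resolve_right haB
  have hbB : b ∈ B := (h.mem_or_mem b).resolve_left hbA
  exact h.2 a haA haB b hbB hbA (hK haK hbK (by rintro rfl; exact haB hbB))

section Comap

variable {W : Type*} [Fintype W] [DecidableEq W] {H : SimpleGraph W} {G : SimpleGraph V}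

lemma IsSep.comap {A B : Finset V} (h : IsSep G A B) (f : H →g G) (hf : Function.Injective f) :
    IsSep H (A.preimage f hf.injOn) (B.preimage f hf.injOn) := by
  refine ⟨eq_univ_of_forall fun v => ?_, fun a ha haB b hb hbA hab => ?_⟩
  · simpa using h.mem_or_mem (f v)
  · simp only [mem_preimage] at ha haB hb hbA
    exact h.2 _ ha haB _ hb hbA (f.map_adj hab)

lemma ImprovedGraph.adj_map {k : ℕ} (f : H →g G) (hf : Function.Injective f) {x y : W}
    (hxy : (ImprovedGraph H k).Adj x y) : (ImprovedGraph G k).Adj (f x) (f y) := by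
  rw [improvedGraph_adj_iff] at hxy ⊢
  refine ⟨hf.ne hxy.1, fun A B hAB hxA hxB hyB hyA => ?_⟩
  calc k < (A.preimage f hf.injOn ∩ B.preimage f hf.injOn).card :=
        hxy.2 _ _ (hAB.comap f hf) (by simpa) (by simpa) (by simpa) (by simpa)
    _ ≤ (A ∩ B).card := by
        rw [← preimage_inter]
        exact card_le_card_of_injOn f (fun v hv => mem_preimage.mp hv) hf.injOn

end Comap

section Lift

open Function

variable {G : SimpleGraph V} {A B : Finset V} {A' B' : Finset (A : Set V)}

lemma IsSep.lift_induce (hAB : IsSep G A B) (h : IsSep (G.induce (A : Set V)) A' B')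
    (hB : ∀ c : (A : Set V), (c : V) ∈ B → c ∈ B') :
    IsSep G (A'.map (Embedding.subtype _)) (B'.map (Embedding.subtype _) ∪ Aᶜ) := by
  refine ⟨eq_univ_of_forall fun v => ?_, fun a ha haY b hb hbX hab => ?_⟩
  · by_cases hv : v ∈ A
    · simpa [hv] using h.mem_or_mem ⟨v, hv⟩
    · simp [hv]
  · simp only [mem_map, Function.Embedding.coe_subtype, mem_union, mem_compl, not_or,
      not_exists, not_and, not_not] at ha haY hb hbX
    obtain ⟨a, ha, rfl⟩ := ha
    rcases hb with ⟨b, hb, rfl⟩ | hbA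
    · exact h.2 a ha (fun h' => haY.1 a h' rfl) b hb (fun h' => hbX b h' rfl) hab
    · exact hAB.2 a (mem_coe.mp a.2) (fun h' => haY.1 a (hB a h') rfl) b
        ((hAB.mem_or_mem b).resolve_left hbA) hbA hab

lemma card_inter_lift_induce :
    (A'.map (Embedding.subtype _) ∩ (B'.map (Embedding.subtype _) ∪ Aᶜ)).card =
      (A' ∩ B').card := by
  rw [← card_map (Embedding.subtype _)]
  congr 1
  ext v
  by_cases hv : v ∈ A <;> simp [hv]

lemma lt_card_of_improvedGraph_adj_of_separates (hAB : IsSep G A B) {k : ℕ} {x y : (A : Set V)}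
    (hxy : (ImprovedGraph G k).Adj x y) (h : IsSep (G.induce (A : Set V)) A' B')
    (hB : ∀ c : (A : Set V), (c : V) ∈ B → c ∈ B')
    (hxA : x ∈ A') (hxB : x ∉ B') (hyB : y ∈ B') (hyA : y ∉ A') : k < (A' ∩ B').card :=
  card_inter_lift_induce (A := A) ▸ (improvedGraph_adj_iff.mp hxy).2 _ _ (hAB.lift_induce h hB)
    (by simp [hxA]) (by simp [hxB]) (by simp [hyB]) (by simp [hyA])

lemma improvedGraph_induce_adj_of_adj (hAB : IsSep G A B) (hK : G.IsClique (↑(A ∩ B) : Set V))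
    {k : ℕ} {x y : (A : Set V)} (hxy : (ImprovedGraph G k).Adj x y) :
    (ImprovedGraph (G.induce (A : Set V)) k).Adj x y := by
  refine improvedGraph_adj_iff.mpr
    ⟨fun h => (improvedGraph_adj_iff.mp hxy).1 (congrArg Subtype.val h),
      fun A' B' h hxA hxB hyB hyA => ?_⟩
  have hKA : (G.induce (A : Set V)).IsClique {c | (c : V) ∈ B} := by
    rw [SimpleGraph.isClique_induce_iff]
    rintro _ ⟨c, hc, rfl⟩ _ ⟨d, hd, rfl⟩ hcd
    exact hK (mem_inter.mpr ⟨c.2, hc⟩) (mem_inter.mpr ⟨d.2, hd⟩) hcd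
  rcases h.subset_or_subset_of_isClique hKA with hB' | hB'
  · rw [inter_comm]
    exact lt_card_of_improvedGraph_adj_of_separates hAB hxy.symm h.symm (fun c hc => hB' hc)
      hyB hyA hxA hxB
  · exact lt_card_of_improvedGraph_adj_of_separates hAB hxy h (fun c hc => hB' hc)
      hxA hxB hyB hyA

end Lift

theorem improved_graph_induce_on_clique_sep_side_general (G : SimpleGraph V) (A B : Finset V)
    (k : ℕ) (h : IsCliqueSep G A B) :
    (ImprovedGraph G k).induce (↑A : Set V) =
      ImprovedGraph (G.induce (↑A : Set V)) k := by
  ext x y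
  exact ⟨improvedGraph_induce_adj_of_adj h.1 h.2.2.2,
    ImprovedGraph.adj_map (SimpleGraph.Embedding.induce _).toHom Subtype.val_injective⟩

/-- if `(A,B)` is a clique separation of `G`, then for every positive
integer `k` the subgraph of the `k`-improved graph of `G` induced on `A` equals the
`k`-improved graph of `G[A]`. -/
theorem improved_graph_induce_on_clique_sep_side (G : SimpleGraph V) (A B : Finset V)
    (k : ℕ) (hk : 0 < k) (h : IsCliqueSep G A B) :
    (ImprovedGraph G k).induce (↑A : Set V) =
      ImprovedGraph (G.induce (↑A : Set V)) k :=
  improved_graph_induce_on_clique_sep_side_general G A B k h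
end

section
/- Let G be a graph, S ⊆ V(G) an important {v}-D separator of size at most k that is a k-important {v}-D separator distinct from {v}, and suppose u is reachable from v in G − S. Then S is a k-important {u}-D separator. -/
open Finset

variable {V : Type*} [Fintype V] [DecidableEq V]

/-! For a single source `a`, everything in the definition of a (`k`-)important separator `W`
sees `a` only through its component in `G − W`; and a competing separator `W'` whose reachable
set contains that component cannot separate `a` from another vertex `b` of it, so `W'` sees `a`
and `b` alike as well. -/

section

omit [Fintype V] [DecidableEq V]

variable {G : SimpleGraph V} {W D : Finset V}

namespace AvoidReach

variable {x y z : V}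

theorem symm (h : AvoidReach G W x y) : AvoidReach G W y x := by
  obtain ⟨p, hp⟩ := h
  exact ⟨p.reverse, fun w hw => hp w (by simpa using hw)⟩

theorem trans (h₁ : AvoidReach G W x y) (h₂ : AvoidReach G W y z) : AvoidReach G W x z := by
  obtain ⟨p, hp⟩ := h₁
  obtain ⟨q, hq⟩ := h₂
  exact ⟨p.append q, fun w hw => (p.mem_support_append_iff q).mp hw |>.elim (hp w) (hq w)⟩

theorem mono {W' : Finset V} (hW : W' ⊆ W) (h : AvoidReach G W x y) : AvoidReach G W' x y := by
  obtain ⟨p, hp⟩ := h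
  exact ⟨p, fun w hw hw' => hp w hw (hW hw')⟩

end AvoidReach

variable {a b : V}

theorem mem_reachSet_singleton {y : V} : y ∈ ReachSet G W {a} ↔ AvoidReach G W a y := by
  simp [ReachSet]

theorem reachSet_singleton_eq (h : AvoidReach G W a b) :
    ReachSet G W {a} = ReachSet G W {b} := by
  ext y
  simp only [mem_reachSet_singleton]
  exact ⟨h.symm.trans, h.trans⟩

theorem isSepSet_singleton_iff (h : AvoidReach G W a b) :
    IsSepSet G W {a} D ↔ IsSepSet G W {b} D := by
  simp only [IsSepSet, Finset.mem_singleton, forall_eq]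
  exact ⟨fun hs y hy hby => hs y hy (h.trans hby), fun hs y hy hay => hs y hy (h.symm.trans hay)⟩

theorem avoidReach_of_reachSet_subset {W' : Finset V} (h : AvoidReach G W a b)
    (hss : ReachSet G W {a} ⊆ ReachSet G W' {a}) : AvoidReach G W' a b :=
  mem_reachSet_singleton.mp (hss (mem_reachSet_singleton.mpr h))

theorem IsImpSep.singleton_of_avoidReach (hi : IsImpSep G {a} D W) (h : AvoidReach G W a b) :
    IsImpSep G {b} D W := by
  obtain ⟨hsep, hmin, himp⟩ := hi
  refine ⟨(isSepSet_singleton_iff h).mp hsep, fun W' hW' hne hs => ?_, fun W' hs hcard hss => ?_⟩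
  · exact hmin W' hW' hne ((isSepSet_singleton_iff (h.mono hW')).mpr hs)
  · have hba : AvoidReach G W' b a := avoidReach_of_reachSet_subset h.symm hss.subset
    rw [← reachSet_singleton_eq h, reachSet_singleton_eq hba] at hss
    exact himp W' ((isSepSet_singleton_iff hba).mp hs) hcard hss

theorem IsKImpSep.singleton_of_avoidReach {k : ℕ} (hk : IsKImpSep G k {a} D W)
    (h : AvoidReach G W a b) : IsKImpSep G k {b} D W := by
  obtain ⟨himp, hcard, hbest⟩ := hk
  refine ⟨himp.singleton_of_avoidReach h, hcard, fun W' hW' hWk hne hss => ?_⟩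
  have hba : AvoidReach G W' b a := avoidReach_of_reachSet_subset h.symm hss
  rw [← reachSet_singleton_eq h, reachSet_singleton_eq hba] at hss
  exact hbest W' (hW'.singleton_of_avoidReach hba) hWk hne hss

end

theorem kImpSep_basis_change_general (G : SimpleGraph V) (k : ℕ) (D S : Finset V) (v u : V)
    (hS : IsKImpSep G k {v} D S) (hu : AvoidReach G S v u) :
    IsKImpSep G k {u} D S :=
  hS.singleton_of_avoidReach hu

/-- if `S` is a `k`-important `{v}`-`D` separator distinct from `{v}` and
`u` is reachable from `v` in `G − S`, then `S` is a `k`-important `{u}`-`D` separator. -/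
theorem kImpSep_basis_change (G : SimpleGraph V) (k : ℕ) (D S : Finset V) (v u : V)
    (hS : IsKImpSep G k {v} D S) (hne : S ≠ {v}) (hu : AvoidReach G S v u) :
    IsKImpSep G k {u} D S :=
  kImpSep_basis_change_general G k D S v u hS hu
end
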